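/- Define polynomial functions of (β, μ, κ) ∈ ℝ³: A = μ² + (1/3)(β² − βκ + κ²) + 1 and B = (1/27)(2β³ − 3β²κ − 3βκ² + 2κ³) + (1/3)(μ²(β+κ) + κ − 2β). Define two vector fields on ℝ³ acting on differentiable functions f(β,μ,κ) by V₂f = (βκ + 2μ² + 2)·∂f/∂β + μ(2κ − β)·∂f/∂μ + (κ² − 2μ² + 4)·∂f/∂κ and V₃f = 3βμ·∂f/∂β + (μ² + βκ − β² + 1)·∂f/∂μ + μ(κ − 2β)·∂f/∂κ. Then for all (β, μ, κ) ∈ ℝ³ the identities 3·B·V₂A = 2·A·V₂B and 3·B·V₃A = 2·A·V₃B hold; consequently, wherever B ≠ 0, the function A³/B² is annihilated by both V₂ and V₃: V₂(A³/B²) = 0 and V₃(A³/B²) = 0. -/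

import Mathlib

/-- The polynomial function `A(β,μ,κ) = μ² + (β² - βκ + κ²)/3 + 1`. -/
noncomputable def funA (β μ κ : ℝ) : ℝ :=
  μ ^ 2 + (β ^ 2 - β * κ + κ ^ 2) / 3 + 1

/-- The polynomial function
`B(β,μ,κ) = (2β³ - 3β²κ - 3βκ² + 2κ³)/27 + (μ²(β+κ) + κ - 2β)/3`. -/
noncomputable def funB (β μ κ : ℝ) : ℝ :=
  (2 * β ^ 3 - 3 * β ^ 2 * κ - 3 * β * κ ^ 2 + 2 * κ ^ 3) / 27
    + (μ ^ 2 * (β + κ) + κ - 2 * β) / 3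

/-- The first-order differential operator
`V₂ f = (βκ + 2μ² + 2)∂f/∂β + μ(2κ - β)∂f/∂μ + (κ² - 2μ² + 4)∂f/∂κ`. -/
noncomputable def V₂ (f : ℝ → ℝ → ℝ → ℝ) (β μ κ : ℝ) : ℝ :=
  (β * κ + 2 * μ ^ 2 + 2) * deriv (fun b => f b μ κ) β
    + μ * (2 * κ - β) * deriv (fun m => f β m κ) μ
    + (κ ^ 2 - 2 * μ ^ 2 + 4) * deriv (fun c => f β μ c) κ

/-- The first-order differential operator
`V₃ f = 3βμ ∂f/∂β + (μ² + βκ - β² + 1)∂f/∂μ + μ(κ - 2β)∂f/∂κ`. -/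
noncomputable def V₃ (f : ℝ → ℝ → ℝ → ℝ) (β μ κ : ℝ) : ℝ :=
  3 * β * μ * deriv (fun b => f b μ κ) β
    + (μ ^ 2 + β * κ - β ^ 2 + 1) * deriv (fun m => f β m κ) μ
    + μ * (κ - 2 * β) * deriv (fun c => f β μ c) κ

/-! `A` and `B` are eigenfunctions of both vector fields with eigenvalues in ratio `2 : 3`:
`V₂ A = 2κ A`, `V₂ B = 3κ B`, `V₃ A = 2μ A`, `V₃ B = 3μ B`. Hence `3 B Vᵢ A = 2 A Vᵢ B`, and since
each `Vᵢ` is a derivation, `Vᵢ (A³/B²) = A² (3 B Vᵢ A - 2 A Vᵢ B) / B³ = 0`. -/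

noncomputable def firstOrderOp (a b c : ℝ) (f : ℝ → ℝ → ℝ → ℝ) (β μ κ : ℝ) : ℝ :=
  a * deriv (fun t => f t μ κ) β + b * deriv (fun t => f β t κ) μ + c * deriv (fun t => f β μ t) κ

def PartiallyDifferentiableAt (f : ℝ → ℝ → ℝ → ℝ) (β μ κ : ℝ) : Prop :=
  DifferentiableAt ℝ (fun t => f t μ κ) β ∧ DifferentiableAt ℝ (fun t => f β t κ) μ ∧
    DifferentiableAt ℝ (fun t => f β μ t) κ

theorem deriv_cube_div_sq {f g : ℝ → ℝ} {x : ℝ} (hf : DifferentiableAt ℝ f x)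
    (hg : DifferentiableAt ℝ g x) (hg0 : g x ≠ 0) :
    deriv (fun t => f t ^ 3 / g t ^ 2) x
      = f x ^ 2 * (3 * g x * deriv f x - 2 * f x * deriv g x) / g x ^ 3 := by
  rw [((hf.hasDerivAt.fun_pow 3).fun_div (hg.hasDerivAt.fun_pow 2) (pow_ne_zero 2 hg0)).deriv]
  field_simp
  ring

theorem firstOrderOp_cube_div_sq (a b c : ℝ) {f g : ℝ → ℝ → ℝ → ℝ} {β μ κ : ℝ}
    (hf : PartiallyDifferentiableAt f β μ κ) (hg : PartiallyDifferentiableAt g β μ κ)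
    (hg0 : g β μ κ ≠ 0) :
    firstOrderOp a b c (fun x y z => f x y z ^ 3 / g x y z ^ 2) β μ κ
      = f β μ κ ^ 2 * (3 * g β μ κ * firstOrderOp a b c f β μ κ
          - 2 * f β μ κ * firstOrderOp a b c g β μ κ) / g β μ κ ^ 3 := by
  obtain ⟨hf₁, hf₂, hf₃⟩ := hf
  obtain ⟨hg₁, hg₂, hg₃⟩ := hg
  simp only [firstOrderOp, deriv_cube_div_sq hf₁ hg₁ hg0, deriv_cube_div_sq hf₂ hg₂ hg0,
    deriv_cube_div_sq hf₃ hg₃ hg0]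
  ring

section

variable {f g : ℝ → ℝ → ℝ → ℝ} {β μ κ : ℝ}

theorem V₂_cube_div_sq (hf : PartiallyDifferentiableAt f β μ κ)
    (hg : PartiallyDifferentiableAt g β μ κ) (hg0 : g β μ κ ≠ 0) :
    V₂ (fun x y z => f x y z ^ 3 / g x y z ^ 2) β μ κ
      = f β μ κ ^ 2 * (3 * g β μ κ * V₂ f β μ κ - 2 * f β μ κ * V₂ g β μ κ) / g β μ κ ^ 3 :=
  firstOrderOp_cube_div_sq _ _ _ hf hg hg0

theorem V₃_cube_div_sq (hf : PartiallyDifferentiableAt f β μ κ)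
    (hg : PartiallyDifferentiableAt g β μ κ) (hg0 : g β μ κ ≠ 0) :
    V₃ (fun x y z => f x y z ^ 3 / g x y z ^ 2) β μ κ
      = f β μ κ ^ 2 * (3 * g β μ κ * V₃ f β μ κ - 2 * f β μ κ * V₃ g β μ κ) / g β μ κ ^ 3 :=
  firstOrderOp_cube_div_sq _ _ _ hf hg hg0

end

section

variable (β μ κ : ℝ)

theorem partiallyDifferentiableAt_funA : PartiallyDifferentiableAt funA β μ κ := by
  unfold PartiallyDifferentiableAt funA
  refine ⟨?_, ?_, ?_⟩ <;> fun_prop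

theorem partiallyDifferentiableAt_funB : PartiallyDifferentiableAt funB β μ κ := by
  unfold PartiallyDifferentiableAt funB
  refine ⟨?_, ?_, ?_⟩ <;> fun_prop

theorem deriv_funA_β : deriv (fun t => funA t μ κ) β = (2 * β - κ) / 3 := by
  unfold funA; simp (disch := fun_prop)

theorem deriv_funA_μ : deriv (fun t => funA β t κ) μ = 2 * μ := by
  unfold funA; simp (disch := fun_prop)

theorem deriv_funA_κ : deriv (fun t => funA β μ t) κ = (2 * κ - β) / 3 := by
  unfold funA; simp (disch := fun_prop); ring

theorem deriv_funB_β :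
    deriv (fun t => funB t μ κ) β = (2 * β ^ 2 - 2 * β * κ - κ ^ 2) / 9 + (μ ^ 2 - 2) / 3 := by
  unfold funB; simp (disch := fun_prop); ring

theorem deriv_funB_μ : deriv (fun t => funB β t κ) μ = 2 * μ * (β + κ) / 3 := by
  unfold funB; simp (disch := fun_prop)

theorem deriv_funB_κ :
    deriv (fun t => funB β μ t) κ = (2 * κ ^ 2 - 2 * β * κ - β ^ 2) / 9 + (μ ^ 2 + 1) / 3 := by
  unfold funB; simp (disch := fun_prop); ring

theorem V₂_funA : V₂ funA β μ κ = 2 * κ * funA β μ κ := by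
  rw [V₂, deriv_funA_β, deriv_funA_μ, deriv_funA_κ, funA]; ring

theorem V₂_funB : V₂ funB β μ κ = 3 * κ * funB β μ κ := by
  rw [V₂, deriv_funB_β, deriv_funB_μ, deriv_funB_κ, funB]; ring

theorem V₃_funA : V₃ funA β μ κ = 2 * μ * funA β μ κ := by
  rw [V₃, deriv_funA_β, deriv_funA_μ, deriv_funA_κ, funA]; ring

theorem V₃_funB : V₃ funB β μ κ = 3 * μ * funB β μ κ := by
  rw [V₃, deriv_funB_β, deriv_funB_μ, deriv_funB_κ, funB]; ring

end

theorem first_integral_A3_over_B2 :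
    (∀ β μ κ : ℝ,
      3 * funB β μ κ * V₂ funA β μ κ = 2 * funA β μ κ * V₂ funB β μ κ ∧
      3 * funB β μ κ * V₃ funA β μ κ = 2 * funA β μ κ * V₃ funB β μ κ) ∧
    (∀ β μ κ : ℝ, funB β μ κ ≠ 0 →
      V₂ (fun b m c => (funA b m c) ^ 3 / (funB b m c) ^ 2) β μ κ = 0 ∧
      V₃ (fun b m c => (funA b m c) ^ 3 / (funB b m c) ^ 2) β μ κ = 0) := by
  refine ⟨fun β μ κ => ⟨?_, ?_⟩, fun β μ κ hB => ⟨?_, ?_⟩⟩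
  · rw [V₂_funA, V₂_funB]; ring
  · rw [V₃_funA, V₃_funB]; ring
  · rw [V₂_cube_div_sq (partiallyDifferentiableAt_funA β μ κ)
      (partiallyDifferentiableAt_funB β μ κ) hB, V₂_funA, V₂_funB]
    ring
  · rw [V₃_cube_div_sq (partiallyDifferentiableAt_funA β μ κ)
      (partiallyDifferentiableAt_funB β μ κ) hB, V₃_funA, V₃_funB]
    ring
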